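/- (Simulation bound for clipped optimistic values; Lemma lsvi-simulation of the paper.) Let S be a finite state space, 𝒜 a finite action set, H ∈ ℕ, and d₀ an initial distribution on S. Let P* be a transition model, r = (r_h) a reward with r_h : S×𝒜 → ℝ, M_V ∈ ℝ, β ≥ 0, b_h : S×𝒜 → [0,∞) arbitrary nonnegative functions, and P̂_h : S×𝒜×S → ℝ arbitrary real-valued functions. Define V̂_H ≡ 0, Q̂_h(s,a) := r_h(s,a) + Σ_{s'} P̂_h(s'|s,a) V̂_{h+1}(s') + β·b_h(s,a), a deterministic greedy policy π̂ with Q̂_h(s, π̂_h(s)) = max_a Q̂_h(s,a), and V̂_h(s) := min{ max_a Q̂_h(s,a), M_V }. Let V^{π̂}_{P*,r;h} denote the value functions of π̂ under P* and r (V^{π̂}_{P*,r;H} ≡ 0, V^{π̂}_{P*,r;h}(s) = r_h(s,π̂_h(s)) + Σ_{s'} P*_h(s'|s,π̂_h(s)) V^{π̂}_{P*,r;h+1}(s')). Then Σ_s d₀(s)·(V̂_0(s) − V^{π̂}_{P*,r;0}(s)) ≤ Σ_{h=0}^{H−1} E_{π̂,P*}[ β·b_h(s_h,a_h) + Σ_{s'}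 (P̂_h(s'|s_h,a_h) − P*_h(s'|s_h,a_h)) · V̂_{h+1}(s') ], where E_{π̂,P*} is the expectation over the trajectory generated by executing π̂ in P* from d₀ (so a_h = π̂_h(s_h)). -/

import Mathlib

/-!
Write `Δ_h = V̂_h − V^{π̂}_h`. Clipping only lowers `V̂_h` below `max_a Q̂_h = Q̂_h(·, π̂_h)`, so
unrolling one Bellman step gives, with `a = π̂_h s`,
`Δ_h(s) ≤ β b_h(s, a) + Σ_{s'} (P̂_h − P*_h)(s'|s, a) V̂_{h+1}(s') + Σ_{s'} P*_h(s'|s, a) Δ_{h+1}(s')`.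
Averaged against the occupancy of `π̂` in `P*`, the last term is the average of `Δ_{h+1}` under
the next occupancy; telescoping from `h = 0` to `H`, where `Δ_H = 0`, gives the bound.
-/

noncomputable section

open Finset

def IsDist {X : Type*} [Fintype X] (p : X → ℝ) : Prop :=
  (∀ x, 0 ≤ p x) ∧ (∑ x, p x) = 1

variable {S Act : Type*} [Fintype S] [Fintype Act]

/-- State marginal `Pr(s_h = s)` when the deterministic policy `π` is executed in the
transition model `P` starting from `d0` (so that the state-action occupancy at step
`h` is supported on pairs `(s, π_h(s))`). -/
def soc (d0 : S → ℝ) (P : ℕ → S → Act → S → ℝ) (π : ℕ → S → Act) : ℕ → S → ℝ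
  | 0 => d0
  | h + 1 => fun s' => ∑ s, soc d0 P π h s * P h s (π h s) s'

end

open Finset

section Occupancy

variable {S Act : Type*} [Fintype S] {d0 : S → ℝ} {P : ℕ → S → Act → S → ℝ} {π : ℕ → S → Act}

theorem soc_nonneg (hd0 : ∀ s, 0 ≤ d0 s) (hP : ∀ h s a s', 0 ≤ P h s a s') :
    ∀ h s, 0 ≤ soc d0 P π h s
  | 0 => hd0
  | h + 1 => fun s' =>
      sum_nonneg fun s _ => mul_nonneg (soc_nonneg hd0 hP h s) (hP h s (π h s) s')

theorem sum_soc_mul_sum_transition (h : ℕ) (f : S → ℝ) :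
    ∑ s, soc d0 P π h s * ∑ s', P h s (π h s) s' * f s' = ∑ s', soc d0 P π (h + 1) s' * f s' := by
  simp only [soc, mul_sum, sum_mul, mul_assoc]
  exact sum_comm

theorem sum_mul_le_sum_soc_add_of_le_backup {D g : ℕ → S → ℝ} {n : ℕ} (hd0 : ∀ s, 0 ≤ d0 s)
    (hP : ∀ h s a s', 0 ≤ P h s a s')
    (hD : ∀ h < n, ∀ s, D h s ≤ g h s + ∑ s', P h s (π h s) s' * D (h + 1) s') :
    ∑ s, d0 s * D 0 s
      ≤ ∑ h ∈ range n, ∑ s, soc d0 P π h s * g h s + ∑ s, soc d0 P π n s * D n s := by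
  induction n with
  | zero => simp [soc]
  | succ n ih =>
    have hstep : ∑ s, soc d0 P π n s * D n s
        ≤ ∑ s, soc d0 P π n s * g n s + ∑ s, soc d0 P π (n + 1) s * D (n + 1) s := by
      rw [← sum_soc_mul_sum_transition, ← sum_add_distrib]
      refine sum_le_sum fun s _ => ?_
      rw [← mul_add]
      exact mul_le_mul_of_nonneg_left (hD n n.lt_succ_self s) (soc_nonneg hd0 hP n s)
    have := ih fun h hh => hD h (hh.trans n.lt_succ_self)
    rw [sum_range_succ]
    linarith

theorem sum_mul_le_sum_soc_of_le_backup {D g : ℕ → S → ℝ} {H : ℕ} (hd0 : ∀ s, 0 ≤ d0 s)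
    (hP : ∀ h s a s', 0 ≤ P h s a s')
    (hD : ∀ h < H, ∀ s, D h s ≤ g h s + ∑ s', P h s (π h s) s' * D (h + 1) s')
    (hDH : ∀ s, D H s ≤ 0) :
    ∑ s, d0 s * D 0 s ≤ ∑ h ∈ range H, ∑ s, soc d0 P π h s * g h s := by
  have hlast : ∑ s, soc d0 P π H s * D H s ≤ 0 :=
    sum_nonpos fun s _ => mul_nonpos_of_nonneg_of_nonpos (soc_nonneg hd0 hP H s) (hDH s)
  linarith [sum_mul_le_sum_soc_add_of_le_backup hd0 hP hD]

end Occupancy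

variable {S Act : Type*} [Fintype S] [Fintype Act]

theorem simulation_bound_clipped_general [Nonempty Act]
    (H : ℕ)
    (d0 : S → ℝ) (hd0 : IsDist d0)
    (Pstar : ℕ → S → Act → S → ℝ) (hPstar : ∀ h s a, IsDist (Pstar h s a))
    (r : ℕ → S → Act → ℝ) (M : ℝ) (β : ℝ)
    (b : ℕ → S → Act → ℝ)
    (Phat : ℕ → S → Act → S → ℝ)
    (Qhat : ℕ → S → Act → ℝ) (Vhat : ℕ → S → ℝ)
    (hVhatH : ∀ s, Vhat H s = 0)
    (hQhat : ∀ h, h < H → ∀ s a,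
      Qhat h s a = r h s a + (∑ s', Phat h s a s' * Vhat (h + 1) s') + β * b h s a)
    (πhat : ℕ → S → Act)
    (hπhat : ∀ h, h < H → ∀ s,
      Qhat h s (πhat h s) = Finset.univ.sup' Finset.univ_nonempty (fun a => Qhat h s a))
    (hVhat : ∀ h, h < H → ∀ s,
      Vhat h s = min (Finset.univ.sup' Finset.univ_nonempty (fun a => Qhat h s a)) M)
    (Vpi : ℕ → S → ℝ)
    (hVpiH : ∀ s, Vpi H s = 0)
    (hVpi : ∀ h, h < H → ∀ s,
      Vpi h s = r h s (πhat h s) + ∑ s', Pstar h s (πhat h s) s' * Vpi (h + 1) s') :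
    ∑ s, d0 s * (Vhat 0 s - Vpi 0 s)
      ≤ ∑ h ∈ Finset.range H, ∑ s, soc d0 Pstar πhat h s *
          (β * b h s (πhat h s)
            + ∑ s', (Phat h s (πhat h s) s' - Pstar h s (πhat h s) s') * Vhat (h + 1) s') := by
  refine sum_mul_le_sum_soc_of_le_backup (D := fun h s => Vhat h s - Vpi h s) hd0.1
    (fun h s a => (hPstar h s a).1) (fun h hh s => ?_) (fun s => by simp [hVhatH, hVpiH])
  have hclip : Vhat h s ≤ Qhat h s (πhat h s) := by
    rw [hVhat h hh s, hπhat h hh s]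
    exact min_le_left _ _
  rw [hQhat h hh s] at hclip
  rw [hVpi h hh s]
  simp only [sub_mul, mul_sub, sum_sub_distrib]
  linarith

/-- **Simulation bound for clipped optimistic values.**
With `V̂, Q̂` the clipped optimistic backups built from an arbitrary (not necessarily
stochastic) model `P̂` and bonuses `b`, `π̂` greedy w.r.t. `Q̂`, and `V^{π̂}` the true
value of `π̂` under `P*` and `r`:
`Σ_s d₀(s)(V̂_0(s) − V^{π̂}_0(s)) ≤ Σ_{h<H} E_{π̂,P*}[β b_h(s_h,a_h)
  + Σ_{s'}(P̂_h(s'|s_h,a_h) − P*_h(s'|s_h,a_h)) V̂_{h+1}(s')]`. -/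
theorem simulation_bound_clipped [Nonempty Act]
    (H : ℕ)
    (d0 : S → ℝ) (hd0 : IsDist d0)
    (Pstar : ℕ → S → Act → S → ℝ) (hPstar : ∀ h s a, IsDist (Pstar h s a))
    (r : ℕ → S → Act → ℝ) (M : ℝ) (β : ℝ) (hβ : 0 ≤ β)
    (b : ℕ → S → Act → ℝ) (hb : ∀ h s a, 0 ≤ b h s a)
    (Phat : ℕ → S → Act → S → ℝ)
    (Qhat : ℕ → S → Act → ℝ) (Vhat : ℕ → S → ℝ)
    (hVhatH : ∀ s, Vhat H s = 0)
    (hQhat : ∀ h, h < H → ∀ s a,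
      Qhat h s a = r h s a + (∑ s', Phat h s a s' * Vhat (h + 1) s') + β * b h s a)
    (πhat : ℕ → S → Act)
    (hπhat : ∀ h, h < H → ∀ s,
      Qhat h s (πhat h s) = Finset.univ.sup' Finset.univ_nonempty (fun a => Qhat h s a))
    (hVhat : ∀ h, h < H → ∀ s,
      Vhat h s = min (Finset.univ.sup' Finset.univ_nonempty (fun a => Qhat h s a)) M)
    (Vpi : ℕ → S → ℝ)
    (hVpiH : ∀ s, Vpi H s = 0)
    (hVpi : ∀ h, h < H → ∀ s,
      Vpi h s = r h s (πhat h s) + ∑ s', Pstar h s (πhat h s) s' * Vpi (h + 1) s') :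
    ∑ s, d0 s * (Vhat 0 s - Vpi 0 s)
      ≤ ∑ h ∈ Finset.range H, ∑ s, soc d0 Pstar πhat h s *
          (β * b h s (πhat h s)
            + ∑ s', (Phat h s (πhat h s) s' - Pstar h s (πhat h s) s') * Vhat (h + 1) s') :=
  simulation_bound_clipped_general H d0 hd0 Pstar hPstar r M β b Phat Qhat Vhat hVhatH hQhat πhat
    hπhat hVhat Vpi hVpiH hVpi
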